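/- For the complete 3-uniform hypergraph G on n ≥ 3 vertices: if A_G x = 0 for x ∈ ℂⁿ with all entries nonzero, then all entries of x are equal. (Key step: for distinct i,j, one has x_i (A_G x)_i − x_j (A_G x)_j = 2 (x_i − x_j) Σ_{k ≠ i,j} x_k.) -/

import Mathlib

/-!
With `S = ∑ k, x k` and `Q = ∑ k, x k ^ 2` one has `(A x)_i = 2 x_i² - 2 S x_i + (S² - Q)`, so
`A x = 0` makes every entry a root of one quadratic. If two entries `a ≠ b` exist, they are its
two roots, whence `S = a + b`, `Q = a² + b²` and every entry is `a` or `b`. Summing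
`(x_k - a)(x_k - b) = 0` over `k` then gives `(n - 2) a b = 0`, impossible for `n ≥ 3` when the
entries are nonzero.
-/

/-- `(A x)_i` for the complete 3-uniform hypergraph on `[n]`. -/
noncomputable def completeAdjMulVec {n : ℕ} (x : Fin n → ℂ) (i : Fin n) : ℂ :=
  ∑ j : Fin n, ∑ k : Fin n,
    (if i ≠ j ∧ i ≠ k ∧ j ≠ k then (1 : ℂ) else 0) * x j * x k

open Finset

lemma completeAdjMulVec_eq {n : ℕ} (x : Fin n → ℂ) (i : Fin n) :
    completeAdjMulVec x i =
      2 * x i ^ 2 - 2 * (∑ j, x j) * x i + ((∑ j, x j) ^ 2 - ∑ j, x j ^ 2) := by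
  have hind : ∀ j k, (if i ≠ j ∧ i ≠ k ∧ j ≠ k then (1 : ℂ) else 0) =
      (1 - if i = j then 1 else 0) * (1 - (if i = k then 1 else 0) - if j = k then 1 else 0) := by
    intro j k
    by_cases hij : i = j <;> by_cases hik : i = k <;> by_cases hjk : j = k <;> simp_all
  simp only [completeAdjMulVec, hind, sub_mul, mul_sub, one_mul, mul_one, zero_mul, mul_zero,
    ite_mul, mul_ite, sum_sub_distrib, sum_ite_eq, mem_univ, if_true, sum_ite_irrel,
    sum_const_zero, ← mul_sum, ← sum_mul, sq]
  ring

section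
variable {K : Type*} [Field K] [NeZero (2 : K)] {S c a b t : K}

lemma add_eq_of_quadratic_roots (ha : 2 * a ^ 2 - 2 * S * a + c = 0)
    (hb : 2 * b ^ 2 - 2 * S * b + c = 0) (hab : a ≠ b) : a + b = S := by
  have h : 2 * (a - b) * (a + b - S) = 0 := by linear_combination ha - hb
  simpa [two_ne_zero, sub_eq_zero, hab] using h

lemma sub_mul_sub_eq_zero_of_quadratic_roots (ht : 2 * t ^ 2 - 2 * S * t + c = 0)
    (ha : 2 * a ^ 2 - 2 * S * a + c = 0) (hb : 2 * b ^ 2 - 2 * S * b + c = 0) (hab : a ≠ b) :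
    (t - a) * (t - b) = 0 := by
  have hS := add_eq_of_quadratic_roots ha hb hab
  have h : 2 * ((t - a) * (t - b)) = 0 := by linear_combination ht - ha - 2 * (t - a) * hS
  exact (mul_eq_zero.1 h).resolve_left two_ne_zero
end

lemma sum_sub_mul_sub {ι R : Type*} [Fintype ι] [CommRing R] (x : ι → R) (a b : R) :
    ∑ k, (x k - a) * (x k - b) =
      ∑ k, x k ^ 2 - (a + b) * ∑ k, x k + Fintype.card ι * (a * b) := by
  simp only [sub_mul, mul_sub, sum_sub_distrib, ← sum_mul, ← mul_sum, sum_const, card_univ,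
    nsmul_eq_mul, sq]
  ring

/-- For the complete 3-uniform hypergraph on `n ≥ 3` vertices: if `A_G x = 0`
and every entry of `x` is nonzero, then all entries of `x` are equal. -/
theorem complete_entries_equal {n : ℕ} (hn : 3 ≤ n) (x : Fin n → ℂ)
    (h1 : ∀ i, completeAdjMulVec x i = 0) (hx : ∀ i, x i ≠ 0) :
    ∀ i j, x i = x j := by
  intro i j
  by_contra hij
  set S := ∑ k, x k
  set Q := ∑ k, x k ^ 2
  have hroot : ∀ k, 2 * x k ^ 2 - 2 * S * x k + (S ^ 2 - Q) = 0 := fun k =>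
    (completeAdjMulVec_eq x k).symm.trans (h1 k)
  have hS : x i + x j = S := add_eq_of_quadratic_roots (hroot i) (hroot j) hij
  have hQ : Q = x i ^ 2 + x j ^ 2 := by linear_combination -(hroot i) - (S - x i + x j) * hS
  have hsum : ∑ k, (x k - x i) * (x k - x j) = 0 := sum_eq_zero fun k _ =>
    sub_mul_sub_eq_zero_of_quadratic_roots (hroot k) (hroot i) (hroot j) hij
  have hn2 : (n : ℂ) - 2 ≠ 0 := sub_ne_zero.2 (by exact_mod_cast (by omega : n ≠ 2))
  have hprod : ((n : ℂ) - 2) * (x i * x j) = 0 := by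
    rw [sum_sub_mul_sub, Fintype.card_fin] at hsum
    linear_combination hsum - hQ - (x i + x j) * hS
  exact mul_ne_zero hn2 (mul_ne_zero (hx i) (hx j)) hprod
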